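/- Assume u_a < 0 and u_b > 0. For every t > 0 and every x with a + u_a t < x < a, the approximate velocity u^ε(x,t) tends to (x−a)/t and the approximate potential density R^ε(x,t) tends to ρ_c·(2·(x − a − u_a t)·(x − a) + (a−c)·u_a t)/(u_a t) as ε → 0⁺. -/

import Mathlib

open Real Filter Topology

/-- The unnormalized complementary error function `erfc z = ∫_z^∞ e^{-s²} ds`. -/
noncomputable def erfc (z : ℝ) : ℝ := ∫ s in Set.Ioi z, Real.exp (-s ^ 2)

/-- The denominator `D(x,t,ε)` appearing in the Hopf–Cole formulas. -/
noncomputable def D (a b u_a u_b x t ε : ℝ) : ℝ :=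
  erfc ((x - a - u_a * t) / Real.sqrt (2 * t * ε))
      * Real.exp (((x - a - u_a * t) ^ 2 - (x - a) ^ 2) / (2 * t * ε))
    + erfc ((x - b) / Real.sqrt (2 * t * ε))
    - erfc ((x - a) / Real.sqrt (2 * t * ε))
    + erfc (-(x - b) / Real.sqrt (2 * t * ε)) * Real.exp (-u_b / ε)

/-- The approximate velocity `u^ε(x,t)`. -/
noncomputable def uEps (a b u_a u_b x t ε : ℝ) : ℝ :=
  (u_a * erfc ((x - a - u_a * t) / Real.sqrt (2 * t * ε))
        * Real.exp (((x - a - u_a * t) ^ 2 - (x - a) ^ 2) / (2 * t * ε))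
      + ε / Real.sqrt (2 * t * ε) * Real.exp (-(x - b) ^ 2 / (2 * t * ε))
          * (1 - Real.exp (-u_b / ε)))
    / D a b u_a u_b x t ε

/-- The approximate potential density `R^ε(x,t)`. -/
noncomputable def REps (a b c d u_a u_b ρ_c ρ_d x t ε : ℝ) : ℝ :=
  (t * ε / Real.sqrt (2 * t * ε) * ρ_c * Real.exp (-(x - a) ^ 2 / (2 * t * ε))
      + ρ_c * (x - c - u_a * t)
          * Real.exp (((x - a - u_a * t) ^ 2 - (x - a) ^ 2) / (2 * t * ε))
          * erfc ((x - a - u_a * t) / Real.sqrt (2 * t * ε))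
      + t * ε / Real.sqrt (2 * t * ε) * ρ_c
          * (Real.exp (-(x - a) ^ 2 / (2 * t * ε)) - Real.exp (-(x - c) ^ 2 / (2 * t * ε)))
      + ρ_c * (x - c)
          * (erfc ((x - c) / Real.sqrt (2 * t * ε)) - erfc ((x - a) / Real.sqrt (2 * t * ε)))
      + ρ_d * Real.exp (-u_b / ε) * erfc (-(x - d) / Real.sqrt (2 * t * ε)))
    / D a b u_a u_b x t ε

/-!
Put `M = (2tε)^{-1/2}`, so that `M → ∞` as `ε → 0⁺`, and multiply the numerators and the
denominator `D` by `M e^{(a-x)² M²}`. After `erfc (-y) = √π - erfc y`, every term is a constant,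
a Gaussian `e^{c M²}` with `c < 0`, or `M e^{r M²} erfc (k M)` with `k > 0` and `r ≤ k²`. Since
`z e^{z²} erfc z → 1/2` (squeeze between `e^{-z²} (1/(2z) - 1/(4z³)) ≤ erfc z ≤ e^{-z²}/(2z)`),
the latter tends to `1/(2k)` if `r = k²` and to `0` if `r < k²`.
-/

open MeasureTheory Set

lemma integrable_exp_neg_sq : Integrable (fun s : ℝ => exp (-s ^ 2)) := by
  simpa using integrable_exp_neg_mul_sq one_pos

lemma erfc_nonneg (z : ℝ) : 0 ≤ erfc z :=
  setIntegral_nonneg measurableSet_Ioi fun _ _ => (exp_pos _).le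

lemma erfc_add_erfc_of_add_eq_zero {y z : ℝ} (h : y + z = 0) : erfc y + erfc z = √π := by
  obtain rfl : z = -y := by linarith
  have hneg : erfc (-y) = ∫ s in Iic y, exp (-s ^ 2) := by
    rw [erfc, ← integral_comp_neg_Iic]
    simp
  rw [hneg, add_comm, erfc, intervalIntegral.integral_Iic_add_Ioi
    integrable_exp_neg_sq.integrableOn integrable_exp_neg_sq.integrableOn]
  simpa using integral_gaussian 1

lemma erfc_le_of_hasDerivAt {F F' : ℝ → ℝ} {z : ℝ}
    (hderiv : ∀ s ∈ Ici z, HasDerivAt F (F' s) s) (hF : Tendsto F atTop (𝓝 0))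
    (hle : ∀ s ∈ Ioi z, exp (-s ^ 2) ≤ -F' s) : erfc z ≤ F z := by
  have hneg : ∀ s ∈ Ioi z, F' s ≤ 0 := fun s hs => by
    linarith [hle s hs, exp_pos (-s ^ 2)]
  have hint := integrableOn_Ioi_deriv_of_nonpos' hderiv hneg hF
  calc erfc z ≤ ∫ s in Ioi z, -F' s :=
        setIntegral_mono_on integrable_exp_neg_sq.integrableOn hint.neg measurableSet_Ioi hle
    _ = F z := by rw [integral_neg, integral_Ioi_of_hasDerivAt_of_nonpos' hderiv hneg hF]; ring

lemma le_erfc_of_hasDerivAt {F F' : ℝ → ℝ} {z : ℝ}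
    (hderiv : ∀ s ∈ Ici z, HasDerivAt F (F' s) s) (hneg : ∀ s ∈ Ioi z, F' s ≤ 0)
    (hF : Tendsto F atTop (𝓝 0))
    (hle : ∀ s ∈ Ioi z, -F' s ≤ exp (-s ^ 2)) : F z ≤ erfc z := by
  have hint := integrableOn_Ioi_deriv_of_nonpos' hderiv hneg hF
  calc F z = ∫ s in Ioi z, -F' s := by
        rw [integral_neg, integral_Ioi_of_hasDerivAt_of_nonpos' hderiv hneg hF]; ring
    _ ≤ erfc z :=
        setIntegral_mono_on hint.neg integrable_exp_neg_sq.integrableOn measurableSet_Ioi hle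

lemma tendsto_exp_neg_sq_atTop : Tendsto (fun s : ℝ => exp (-s ^ 2)) atTop (𝓝 0) :=
  tendsto_exp_atBot.comp (tendsto_neg_atTop_atBot.comp (tendsto_pow_atTop two_ne_zero))

lemma hasDerivAt_exp_neg_sq (s : ℝ) :
    HasDerivAt (fun s => exp (-s ^ 2)) (-(2 * s) * exp (-s ^ 2)) s := by
  simpa [mul_comm] using ((hasDerivAt_pow 2 s).neg).exp

lemma erfc_le_exp_neg_sq_div {z : ℝ} (hz : 0 < z) : erfc z ≤ exp (-z ^ 2) / (2 * z) := by
  refine erfc_le_of_hasDerivAt (F := fun s => exp (-s ^ 2) / (2 * s))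
    (F' := fun s => -(exp (-s ^ 2) * (1 + (2 * s ^ 2)⁻¹))) (fun s hs => ?_) ?_ (fun s _ => ?_)
  · have hs0 : 0 < s := hz.trans_le hs
    refine ((hasDerivAt_exp_neg_sq s).fun_div ((hasDerivAt_id s).const_mul 2)
      (by positivity)).congr_deriv ?_
    simp only [id]
    field_simp
    ring
  · simpa [div_eq_mul_inv] using tendsto_exp_neg_sq_atTop.mul
      (tendsto_inv_atTop_zero.comp (tendsto_id.const_mul_atTop two_pos))
  · have : 0 ≤ exp (-s ^ 2) * (2 * s ^ 2)⁻¹ := by positivity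
    linarith

lemma exp_neg_sq_mul_le_erfc {z : ℝ} (hz : 1 ≤ z) :
    exp (-z ^ 2) * ((2 * z)⁻¹ - (4 * z ^ 3)⁻¹) ≤ erfc z := by
  refine le_erfc_of_hasDerivAt (F := fun s => exp (-s ^ 2) * ((2 * s)⁻¹ - (4 * s ^ 3)⁻¹))
    (F' := fun s => exp (-s ^ 2) * (3 * (4 * s ^ 4)⁻¹ - 1))
    (fun s hs => ?_) (fun s hs => ?_) ?_ (fun s hs => ?_)
  · have hs0 : 0 < s := by linarith [mem_Ici.mp hs]
    refine ((hasDerivAt_exp_neg_sq s).fun_mul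
      ((((hasDerivAt_id s).const_mul 2).fun_inv (by positivity)).fun_sub
        (((hasDerivAt_pow 3 s).const_mul 4).fun_inv (by positivity)))).congr_deriv ?_
    simp only [id]
    field_simp
    ring
  · have hs1 : 1 ≤ s := hz.trans (le_of_lt hs)
    have : 3 * (4 * s ^ 4)⁻¹ ≤ 1 := by
      rw [← div_eq_mul_inv, div_le_one (by positivity)]
      nlinarith [one_le_pow₀ (n := 4) hs1]
    exact mul_nonpos_of_nonneg_of_nonpos (exp_pos _).le (by linarith)
  · simpa using tendsto_exp_neg_sq_atTop.mul
      ((tendsto_inv_atTop_zero.comp (tendsto_id.const_mul_atTop two_pos)).sub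
        (tendsto_inv_atTop_zero.comp
          ((tendsto_pow_atTop three_ne_zero).const_mul_atTop four_pos)))
  · have hs0 : 0 < s := by linarith [mem_Ioi.mp hs]
    have : 0 ≤ exp (-s ^ 2) * (3 * (4 * s ^ 4)⁻¹) := by positivity
    nlinarith

lemma tendsto_exp_mul_sq_atTop_of_neg {c : ℝ} (hc : c < 0) :
    Tendsto (fun M : ℝ => exp (c * M ^ 2)) atTop (𝓝 0) :=
  tendsto_exp_atBot.comp ((tendsto_pow_atTop two_ne_zero).const_mul_atTop_of_neg hc)

lemma tendsto_mul_exp_sq_mul_erfc :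
    Tendsto (fun z : ℝ => z * exp (z ^ 2) * erfc z) atTop (𝓝 (1 / 2)) := by
  have hlow : Tendsto (fun z : ℝ => 1 / 2 - (4 * z ^ 2)⁻¹) atTop (𝓝 (1 / 2)) := by
    simpa using tendsto_const_nhds.sub
      (tendsto_inv_atTop_zero.comp
        ((tendsto_pow_atTop two_ne_zero).const_mul_atTop (by norm_num : (0 : ℝ) < 4)))
  refine tendsto_of_tendsto_of_tendsto_of_le_of_le' hlow tendsto_const_nhds ?_ ?_
  · filter_upwards [eventually_ge_atTop 1] with z hz
    have hz0 : 0 < z := by linarith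
    calc 1 / 2 - (4 * z ^ 2)⁻¹
        = z * exp (z ^ 2) * (exp (-z ^ 2) * ((2 * z)⁻¹ - (4 * z ^ 3)⁻¹)) := by
          rw [exp_neg]; field_simp
      _ ≤ z * exp (z ^ 2) * erfc z := by gcongr; exact exp_neg_sq_mul_le_erfc hz
  · filter_upwards [eventually_gt_atTop 0] with z hz
    calc z * exp (z ^ 2) * erfc z ≤ z * exp (z ^ 2) * (exp (-z ^ 2) / (2 * z)) := by
          gcongr; exact erfc_le_exp_neg_sq_div hz
      _ = 1 / 2 := by rw [exp_neg]; field_simp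

noncomputable def scaledErfc (k r M : ℝ) : ℝ := M * exp (r * M ^ 2) * erfc (k * M)

lemma tendsto_scaledErfc_sq {k : ℝ} (hk : 0 < k) :
    Tendsto (scaledErfc k (k ^ 2)) atTop (𝓝 (2 * k)⁻¹) := by
  have h := (tendsto_mul_exp_sq_mul_erfc.comp (tendsto_id.const_mul_atTop hk)).const_mul k⁻¹
  rw [show k⁻¹ * (1 / 2) = (2 * k)⁻¹ by field_simp] at h
  refine h.congr fun M => ?_
  simp only [Function.comp_apply, id, scaledErfc]
  field_simp

lemma tendsto_scaledErfc_of_lt {k r : ℝ} (hk : 0 < k) (hr : r < k ^ 2) :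
    Tendsto (scaledErfc k r) atTop (𝓝 0) := by
  have hup : Tendsto (fun M : ℝ => (2 * k)⁻¹ * exp ((r - k ^ 2) * M ^ 2)) atTop (𝓝 0) := by
    simpa using (tendsto_exp_mul_sq_atTop_of_neg (sub_neg.mpr hr)).const_mul (2 * k)⁻¹
  refine tendsto_of_tendsto_of_tendsto_of_le_of_le' tendsto_const_nhds hup ?_ ?_
  · filter_upwards [eventually_gt_atTop 0] with M hM
    have := erfc_nonneg (k * M)
    unfold scaledErfc
    positivity
  · filter_upwards [eventually_gt_atTop 0] with M hM
    calc scaledErfc k r M ≤ M * exp (r * M ^ 2) * (exp (-(k * M) ^ 2) / (2 * (k * M))) := by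
          unfold scaledErfc; gcongr; exact erfc_le_exp_neg_sq_div (by positivity)
      _ = (2 * k)⁻¹ * exp ((r - k ^ 2) * M ^ 2) := by
          rw [sub_mul, exp_sub, exp_neg]; field_simp

lemma tendsto_nhdsGT_zero_of_tendsto_inv_mul_sq {α : Type*} {f : ℝ → α} {l : Filter α} {t : ℝ}
    (ht : 0 < t) (h : Tendsto (fun M => f (2 * t * M ^ 2)⁻¹) atTop l) :
    Tendsto f (𝓝[>] 0) l := by
  have hscale : Tendsto (fun ε : ℝ => (√(2 * t * ε))⁻¹) (𝓝[>] 0) atTop := by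
    refine tendsto_inv_nhdsGT_zero.comp (tendsto_nhdsWithin_iff.mpr ⟨?_, ?_⟩)
    · simpa using ((continuous_const.mul continuous_id).sqrt.tendsto 0).mono_left
        nhdsWithin_le_nhds (f := fun ε : ℝ => √(2 * t * ε))
    · filter_upwards [self_mem_nhdsWithin] with ε (hε : 0 < ε)
      exact sqrt_pos.mpr (by positivity)
  refine (h.comp hscale).congr' ?_
  filter_upwards [self_mem_nhdsWithin] with ε (hε : 0 < ε)
  simp only [Function.comp_apply, inv_pow, sq_sqrt (by positivity : 0 ≤ 2 * t * ε)]
  field_simp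

lemma two_mul_mul_inv_two_mul_mul_sq {t : ℝ} (ht : t ≠ 0) (M : ℝ) :
    2 * t * (2 * t * M ^ 2)⁻¹ = M⁻¹ ^ 2 := by
  rcases eq_or_ne M 0 with rfl | hM
  · simp
  · field_simp

section

variable {a b c d u_a u_b ρ_c ρ_d x t M : ℝ}

lemma D_inv_mul_sq_mul_eq (ht : 0 < t) (hM : 0 < M) :
    D a b u_a u_b x t (2 * t * M ^ 2)⁻¹ * (M * exp ((a - x) ^ 2 * M ^ 2)) =
      scaledErfc (x - a - u_a * t) ((x - a - u_a * t) ^ 2) M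
        + scaledErfc (a - x) ((a - x) ^ 2) M - scaledErfc (b - x) ((a - x) ^ 2) M
        + scaledErfc (b - x) ((a - x) ^ 2 - 2 * t * u_b) M := by
  rw [D, two_mul_mul_inv_two_mul_mul_sq ht.ne', sqrt_sq (inv_nonneg.mpr hM.le)]
  simp only [inv_pow, div_inv_eq_mul, neg_sub, scaledErfc]
  have hE1 : exp (((x - a - u_a * t) ^ 2 - (x - a) ^ 2) * M ^ 2) * exp ((a - x) ^ 2 * M ^ 2)
      = exp ((x - a - u_a * t) ^ 2 * M ^ 2) := by rw [← exp_add]; ring_nf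
  have hE2 : exp (-u_b * (2 * t * M ^ 2)) * exp ((a - x) ^ 2 * M ^ 2)
      = exp (((a - x) ^ 2 - 2 * t * u_b) * M ^ 2) := by rw [← exp_add]; ring_nf
  have ha := erfc_add_erfc_of_add_eq_zero (y := (x - a) * M) (z := (a - x) * M) (by ring)
  have hb := erfc_add_erfc_of_add_eq_zero (y := (x - b) * M) (z := (b - x) * M) (by ring)
  linear_combination (erfc ((x - a - u_a * t) * M) * M) * hE1
    + (M * exp ((a - x) ^ 2 * M ^ 2)) * (hb - ha) + (erfc ((b - x) * M) * M) * hE2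

lemma uEps_inv_mul_sq_eq (ht : 0 < t) (hM : 0 < M) :
    uEps a b u_a u_b x t (2 * t * M ^ 2)⁻¹ =
      (u_a * scaledErfc (x - a - u_a * t) ((x - a - u_a * t) ^ 2) M
        + (2 * t)⁻¹ * exp (((a - x) ^ 2 - (b - x) ^ 2) * M ^ 2)
          * (1 - exp (-(2 * t * u_b) * M ^ 2)))
      / (D a b u_a u_b x t (2 * t * M ^ 2)⁻¹ * (M * exp ((a - x) ^ 2 * M ^ 2))) := by
  rw [uEps, ← mul_div_mul_right _ _ (by positivity : M * exp ((a - x) ^ 2 * M ^ 2) ≠ 0)]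
  congr 1
  rw [two_mul_mul_inv_two_mul_mul_sq ht.ne', sqrt_sq (inv_nonneg.mpr hM.le)]
  simp only [inv_pow, div_inv_eq_mul, scaledErfc]
  have hE1 : exp (((x - a - u_a * t) ^ 2 - (x - a) ^ 2) * M ^ 2) * exp ((a - x) ^ 2 * M ^ 2)
      = exp ((x - a - u_a * t) ^ 2 * M ^ 2) := by rw [← exp_add]; ring_nf
  have hE3 : exp (-(x - b) ^ 2 * M ^ 2) * exp ((a - x) ^ 2 * M ^ 2)
      = exp (((a - x) ^ 2 - (b - x) ^ 2) * M ^ 2) := by rw [← exp_add]; ring_nf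
  have hE4 : exp (-u_b * (2 * t * M ^ 2)) = exp (-(2 * t * u_b) * M ^ 2) := by ring_nf
  have hM2 : (2 * t * M ^ 2)⁻¹ * M ^ 2 = (2 * t)⁻¹ := by field_simp
  linear_combination (u_a * erfc ((x - a - u_a * t) * M) * M) * hE1
    + (exp (-(x - b) ^ 2 * M ^ 2) * exp ((a - x) ^ 2 * M ^ 2)
      * (1 - exp (-u_b * (2 * t * M ^ 2)))) * hM2
    + ((2 * t)⁻¹ * (1 - exp (-u_b * (2 * t * M ^ 2)))) * hE3
    - ((2 * t)⁻¹ * exp (((a - x) ^ 2 - (b - x) ^ 2) * M ^ 2)) * hE4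

lemma REps_inv_mul_sq_eq (ht : 0 < t) (hM : 0 < M) :
    REps a b c d u_a u_b ρ_c ρ_d x t (2 * t * M ^ 2)⁻¹ =
      (ρ_c * 2⁻¹
        + ρ_c * (x - c - u_a * t) * scaledErfc (x - a - u_a * t) ((x - a - u_a * t) ^ 2) M
        + ρ_c * 2⁻¹ * (1 - exp (((a - x) ^ 2 - (c - x) ^ 2) * M ^ 2))
        + ρ_c * (x - c) * (scaledErfc (a - x) ((a - x) ^ 2) M - scaledErfc (c - x) ((a - x) ^ 2) M)
        + ρ_d * scaledErfc (d - x) ((a - x) ^ 2 - 2 * t * u_b) M)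
      / (D a b u_a u_b x t (2 * t * M ^ 2)⁻¹ * (M * exp ((a - x) ^ 2 * M ^ 2))) := by
  rw [REps, ← mul_div_mul_right _ _ (by positivity : M * exp ((a - x) ^ 2 * M ^ 2) ≠ 0)]
  congr 1
  rw [two_mul_mul_inv_two_mul_mul_sq ht.ne', sqrt_sq (inv_nonneg.mpr hM.le)]
  simp only [inv_pow, div_inv_eq_mul, neg_sub, scaledErfc]
  have hE1 : exp (((x - a - u_a * t) ^ 2 - (x - a) ^ 2) * M ^ 2) * exp ((a - x) ^ 2 * M ^ 2)
      = exp ((x - a - u_a * t) ^ 2 * M ^ 2) := by rw [← exp_add]; ring_nf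
  have hE2 : exp (-u_b * (2 * t * M ^ 2)) * exp ((a - x) ^ 2 * M ^ 2)
      = exp (((a - x) ^ 2 - 2 * t * u_b) * M ^ 2) := by rw [← exp_add]; ring_nf
  have hEa : exp (-(x - a) ^ 2 * M ^ 2) * exp ((a - x) ^ 2 * M ^ 2) = 1 := by
    rw [← exp_add, ← exp_zero]; ring_nf
  have hEc : exp (-(x - c) ^ 2 * M ^ 2) * exp ((a - x) ^ 2 * M ^ 2)
      = exp (((a - x) ^ 2 - (c - x) ^ 2) * M ^ 2) := by rw [← exp_add]; ring_nf
  have ha := erfc_add_erfc_of_add_eq_zero (y := (x - a) * M) (z := (a - x) * M) (by ring)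
  have hc := erfc_add_erfc_of_add_eq_zero (y := (x - c) * M) (z := (c - x) * M) (by ring)
  have hM2 : t * (2 * t * M ^ 2)⁻¹ * M ^ 2 = 2⁻¹ := by field_simp
  linear_combination
    (ρ_c * (2 * exp (-(x - a) ^ 2 * M ^ 2) - exp (-(x - c) ^ 2 * M ^ 2))
      * exp ((a - x) ^ 2 * M ^ 2)) * hM2
    + ρ_c * hEa - ρ_c * 2⁻¹ * hEc
    + (ρ_c * (x - c - u_a * t) * erfc ((x - a - u_a * t) * M) * M) * hE1
    + (ρ_c * (x - c) * M * exp ((a - x) ^ 2 * M ^ 2)) * (hc - ha)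
    + (ρ_d * erfc ((d - x) * M) * M) * hE2

lemma tendsto_D_inv_mul_sq_mul (hab : a < b) (hub : 0 < u_b) (ht : 0 < t)
    (hx₁ : a + u_a * t < x) (hx₂ : x < a) :
    Tendsto (fun M => D a b u_a u_b x t (2 * t * M ^ 2)⁻¹ * (M * exp ((a - x) ^ 2 * M ^ 2)))
      atTop (𝓝 ((2 * (x - a - u_a * t))⁻¹ + (2 * (a - x))⁻¹)) := by
  have hbx : (a - x) ^ 2 < (b - x) ^ 2 := by nlinarith
  have hlim := (((tendsto_scaledErfc_sq (by linarith : 0 < x - a - u_a * t)).add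
    (tendsto_scaledErfc_sq (by linarith : 0 < a - x))).sub
      (tendsto_scaledErfc_of_lt (by linarith : 0 < b - x) hbx)).add
    (tendsto_scaledErfc_of_lt (by linarith : 0 < b - x)
      (by nlinarith : (a - x) ^ 2 - 2 * t * u_b < (b - x) ^ 2))
  rw [sub_zero, add_zero] at hlim
  refine hlim.congr' ?_
  filter_upwards [eventually_gt_atTop 0] with M hM
  exact (D_inv_mul_sq_mul_eq ht hM).symm

lemma tendsto_uEps (hab : a < b) (hub : 0 < u_b) (ht : 0 < t)
    (hx₁ : a + u_a * t < x) (hx₂ : x < a) :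
    Tendsto (fun ε => uEps a b u_a u_b x t ε) (𝓝[>] 0) (𝓝 ((x - a) / t)) := by
  have hp : 0 < x - a - u_a * t := by linarith
  have hq : 0 < a - x := by linarith
  refine tendsto_nhdsGT_zero_of_tendsto_inv_mul_sq ht ?_
  have hnum := ((tendsto_scaledErfc_sq hp).const_mul u_a).add
    (((tendsto_exp_mul_sq_atTop_of_neg (by nlinarith : (a - x) ^ 2 - (b - x) ^ 2 < 0)).const_mul
      (2 * t)⁻¹).mul ((tendsto_const_nhds (x := (1 : ℝ))).sub
        (tendsto_exp_mul_sq_atTop_of_neg (by nlinarith : -(2 * t * u_b) < 0))))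
  have hden := tendsto_D_inv_mul_sq_mul hab hub ht hx₁ hx₂
  convert (hnum.div hden (by positivity)).congr' ?_ using 2
  · rw [div_eq_div_iff ht.ne' (by positivity)]
    field_simp
    ring
  · filter_upwards [eventually_gt_atTop 0] with M hM
    exact (uEps_inv_mul_sq_eq ht hM).symm

lemma tendsto_REps (hab : a < b) (hac : a < c) (had : a < d) (hub : 0 < u_b) (ht : 0 < t)
    (hx₁ : a + u_a * t < x) (hx₂ : x < a) :
    Tendsto (fun ε => REps a b c d u_a u_b ρ_c ρ_d x t ε) (𝓝[>] 0)
      (𝓝 (ρ_c * (2 * (x - a - u_a * t) * (x - a) + (a - c) * u_a * t) / (u_a * t))) := by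
  have hp : 0 < x - a - u_a * t := by linarith
  have hq : 0 < a - x := by linarith
  have hcx : (a - x) ^ 2 < (c - x) ^ 2 := by nlinarith
  refine tendsto_nhdsGT_zero_of_tendsto_inv_mul_sq ht ?_
  have hnum := ((((tendsto_const_nhds (x := ρ_c * 2⁻¹)).add
    ((tendsto_scaledErfc_sq hp).const_mul (ρ_c * (x - c - u_a * t)))).add
    (((tendsto_const_nhds (x := (1 : ℝ))).sub
      (tendsto_exp_mul_sq_atTop_of_neg (sub_neg.mpr hcx))).const_mul (ρ_c * 2⁻¹))).add
    (((tendsto_scaledErfc_sq hq).sub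
      (tendsto_scaledErfc_of_lt (by linarith) hcx)).const_mul (ρ_c * (x - c)))).add
    ((tendsto_scaledErfc_of_lt (by linarith : 0 < d - x)
      (by nlinarith : (a - x) ^ 2 - 2 * t * u_b < (d - x) ^ 2)).const_mul ρ_d)
  have hden := tendsto_D_inv_mul_sq_mul hab hub ht hx₁ hx₂
  convert (hnum.div hden (by positivity)).congr' ?_ using 2
  · rw [div_eq_div_iff (by nlinarith) (by positivity)]
    field_simp
    ring
  · filter_upwards [eventually_gt_atTop 0] with M hM
    exact (REps_inv_mul_sq_eq ht hM).symm

end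

theorem vanishing_viscosity_limit_in_rarefaction_general
    (a b c d u_a u_b ρ_c ρ_d : ℝ) (hac : a < c) (hcb : c < b) (hbd : b < d)
    (hub : 0 < u_b) (t x : ℝ) (ht : 0 < t)
    (hx1 : a + u_a * t < x) (hx2 : x < a) :
    Tendsto (fun ε : ℝ => uEps a b u_a u_b x t ε) (𝓝[>] 0) (𝓝 ((x - a) / t))
    ∧ Tendsto (fun ε : ℝ => REps a b c d u_a u_b ρ_c ρ_d x t ε) (𝓝[>] 0)
        (𝓝 (ρ_c * (2 * (x - a - u_a * t) * (x - a) + (a - c) * u_a * t) / (u_a * t))) :=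
  have hab : a < b := hac.trans hcb
  ⟨tendsto_uEps hab hub ht hx1 hx2,
    tendsto_REps hab hac (hab.trans hbd) hub ht hx1 hx2⟩

/-- Case `u_a < 0`, `u_b > 0`, region `a + u_a·t < x < a`: as `ε → 0⁺`, the approximate
velocity tends to `(x−a)/t` and the approximate potential density tends to
`ρ_c·(2·(x − a − u_a·t)·(x − a) + (a−c)·u_a·t)/(u_a·t)`. -/
theorem vanishing_viscosity_limit_in_rarefaction
    (a b c d u_a u_b ρ_c ρ_d : ℝ) (hac : a < c) (hcb : c < b) (hbd : b < d)
    (hua : u_a < 0) (hub : 0 < u_b) (t x : ℝ) (ht : 0 < t)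
    (hx1 : a + u_a * t < x) (hx2 : x < a) :
    Tendsto (fun ε : ℝ => uEps a b u_a u_b x t ε) (𝓝[>] 0) (𝓝 ((x - a) / t))
    ∧ Tendsto (fun ε : ℝ => REps a b c d u_a u_b ρ_c ρ_d x t ε) (𝓝[>] 0)
        (𝓝 (ρ_c * (2 * (x - a - u_a * t) * (x - a) + (a - c) * u_a * t) / (u_a * t))) :=
  vanishing_viscosity_limit_in_rarefaction_general a b c d u_a u_b ρ_c ρ_d hac hcb hbd hub t x ht
    hx1 hx2
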